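/- Relabeling an SLT grammar by a DST automaton: for every SLT grammar G and every DST automaton A with state set Q, there exists an SLT grammar G' of size O(|Q|·|G|) such that val(G') is the tree obtained from val(G) by relabeling every node selected by A (i.e., every node in A(val(G))) from its label a to a marked copy â, leaving all other labels unchanged. -/

import Mathlib

/-- Trees over terminal labels `L`, nonterminals `N`, the leaf symbol `_`
(constructor `leaf`) and parameters `y_i` (constructor `param i`, 1-indexed).
Terminal-labeled nodes have exactly two children; a nonterminal node has a
list of children (its length being constrained by `ArityOk`). -/
inductive PTree (L N : Type) where
  | leaf : PTree L N
  | param : ℕ → PTree L N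
  | term : L → PTree L N → PTree L N → PTree L N
  | nt : N → List (PTree L N) → PTree L N

namespace PTree

variable {L N : Type}

/-- The pre-order list of parameter indices occurring in a tree. -/
def paramList : PTree L N → List ℕ
  | .leaf => []
  | .param i => [i]
  | .term _ l r => paramList l ++ paramList r
  | .nt _ ts => (ts.attach.map (fun t => paramList t.1)).flatten
decreasing_by
  all_goals simp_wf
  all_goals try omega
  all_goals (have := List.sizeOf_lt_of_mem t.2; omega)

/-- The number of nodes of a tree. -/
def nodeCount : PTree L N → ℕ
  | .leaf => 1
  | .param _ => 1
  | .term _ l r => 1 + nodeCount l + nodeCount r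
  | .nt _ ts => 1 + (ts.attach.map (fun t => nodeCount t.1)).sum
decreasing_by
  all_goals simp_wf
  all_goals try omega
  all_goals (have := List.sizeOf_lt_of_mem t.2; omega)

/-- Arities are respected: every nonterminal node labeled `A` has exactly
`rank A` children. -/
inductive ArityOk (rank : N → ℕ) : PTree L N → Prop
  | leaf : ArityOk rank .leaf
  | param (i : ℕ) : ArityOk rank (.param i)
  | term (a : L) {l r : PTree L N} :
      ArityOk rank l → ArityOk rank r → ArityOk rank (.term a l r)
  | nt (A : N) {ts : List (PTree L N)} :
      ts.length = rank A → (∀ t ∈ ts, ArityOk rank t) → ArityOk rank (.nt A ts)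

/-- `Occurs B t` holds iff the nonterminal `B` occurs somewhere in `t`. -/
inductive Occurs (B : N) : PTree L N → Prop
  | here (ts : List (PTree L N)) : Occurs B (.nt B ts)
  | nt (A : N) {ts : List (PTree L N)} {t : PTree L N} :
      t ∈ ts → Occurs B t → Occurs B (.nt A ts)
  | term_left (a : L) {l r : PTree L N} : Occurs B l → Occurs B (.term a l r)
  | term_right (a : L) {l r : PTree L N} : Occurs B r → Occurs B (.term a l r)

/-- Ground trees: binary trees built from terminal symbols and `_`-leaves only
(no nonterminals, no parameters). -/
inductive Ground : PTree L N → Prop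
  | leaf : Ground .leaf
  | term (a : L) {l r : PTree L N} : Ground l → Ground r → Ground (.term a l r)

/-- Substitution of the parameters `y_1, …, y_k` by the trees of `env`
(`y_i` is replaced by the `i`-th entry of `env`). -/
def subst (env : List (PTree L N)) : PTree L N → PTree L N
  | .leaf => .leaf
  | .param i => env.getD (i - 1) .leaf
  | .term a l r => .term a (subst env l) (subst env r)
  | .nt B ts => .nt B (ts.attach.map (fun t => subst env t.1))
decreasing_by
  all_goals simp_wf
  all_goals try omega
  all_goals (have := List.sizeOf_lt_of_mem t.2; omega)

end PTree

open PTree in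
/-- A straight-line (linear) tree grammar `G = (N, S, P)`:
each nonterminal `A` of rank `k` has exactly one production `A → P A`, in whose
right-hand side the parameters `y_1, …, y_k` occur exactly once each and
in this order in pre-order, all arities are respected, and the hierarchical
order `H_G = {(A, B) | B occurs in P A}` is acyclic. -/
structure SLT (L N : Type) where
  rank : N → ℕ
  start : N
  P : N → PTree L N
  rank_start : rank start = 0
  arity : ∀ A, ArityOk rank (P A)
  params : ∀ A, paramList (P A) = List.range' 1 (rank A)
  acyclic : ∀ A, ¬ Relation.TransGen (fun X Y => Occurs Y (P X)) A A

namespace SLT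

variable {L N : Type}

/-- One derivation step: replace one occurrence of a subtree `A(t_1, …, t_k)`
(`A` a nonterminal) by `P A` with each parameter `y_i` replaced by `t_i`. -/
inductive Rw (G : SLT L N) : PTree L N → PTree L N → Prop
  | head (A : N) (ts : List (PTree L N)) :
      Rw G (.nt A ts) (PTree.subst ts (G.P A))
  | term_left {l l' : PTree L N} (a : L) (r : PTree L N) :
      Rw G l l' → Rw G (.term a l r) (.term a l' r)
  | term_right {r r' : PTree L N} (a : L) (l : PTree L N) :
      Rw G r r' → Rw G (.term a l r) (.term a l r')
  | nt_child {t t' : PTree L N} (B : N) (u v : List (PTree L N)) :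
      Rw G t t' → Rw G (.nt B (u ++ t :: v)) (.nt B (u ++ t' :: v))

/-- The size of a grammar: the sum of the numbers of edges of all
right-hand sides. -/
def size [Fintype N] (G : SLT L N) : ℕ :=
  ∑ A : N, (PTree.nodeCount (G.P A) - 1)

end SLT

/-- A deterministic selecting top-down tree (DST) automaton: a state set `Q`,
an initial state `q0`, for each pair `(q, w)` of a state and a terminal label
at most one rule (`rule q w = some ((q₁, q₂), b)` meaning that the rule
`(q, w) → (q₁, q₂)` is present and is selecting iff `b = true`), and for each
state exactly one default rule `default q` (the `(q, %)`-rule). -/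
structure DST (L Q : Type) where
  q0 : Q
  rule : Q → L → Option ((Q × Q) × Bool)
  default : Q → (Q × Q) × Bool

/-- The transition applied in state `q` at a node labeled `w`: the
`(q, w)`-rule if present, and otherwise the default rule of `q`. -/
def DST.step {L Q : Type} (A : DST L Q) (q : Q) (w : L) : (Q × Q) × Bool :=
  (A.rule q w).getD (A.default q)

/-- Run the DST automaton `A` over a ground tree starting in state `q` and
relabel every node at which a selecting rule is applied from its label `a` to
the marked copy `(a, true)`; all other labels `a` become `(a, false)`.
(On non-ground trees the value of this function is irrelevant.) -/
def markRun {L Q N M : Type} (A : DST L Q) : Q → PTree L N → PTree (L × Bool) M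
  | _, .leaf => .leaf
  | _, .param i => .param i
  | q, .term a l r =>
      .term (a, (A.step q a).2)
        (markRun A (A.step q a).1.1 l) (markRun A (A.step q a).1.2 r)
  | _, .nt _ _ => .leaf

/-!
The relabeled grammar has a nonterminal `(A, q)` for every nonterminal `A` of `G` and state `q`
of the automaton; it derives `val(A)` relabeled by the run started in state `q` at the root.
Because the automaton is deterministic and top-down, the state in which that run reaches the
parameter `y_i` of `A` depends only on `A`, `q` and `i`, and it can be computed bottom-up along
the acyclic hierarchical order of `G`. The right-hand side of `(A, q)` is `P(A)` relabeled by
the run from `q`, where a nonterminal node `B` reached in state `q'` becomes `(B, q')` and its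
`i`-th argument is entered in the state that the run from `q'` on `val(B)` reaches `y_i` in.
Relabeling commutes with parameter substitution, so each derivation step of `G` is mirrored
by one of the new grammar, and since relabeling preserves the shape of right-hand sides the
new grammar has size exactly `|Q|·|G|`.
-/

theorem List.mapIdx_attach_val {α β : Type*} (l : List α) (f : ℕ → α → β) :
    (l.attach.mapIdx fun i a => f i a.1) = l.mapIdx f := by
  apply List.ext_getElem <;> simp

theorem List.map_mapIdx_eq_map {α β γ : Type*} {l : List α} {f : ℕ → α → β} {g : β → γ}
    {h : α → γ} (hfg : ∀ i a, a ∈ l → g (f i a) = h a) : (l.mapIdx f).map g = l.map h := by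
  apply List.ext_getElem <;> simp [hfg]

namespace PTree

variable {L N : Type}

@[elab_as_elim]
theorem induction' {motive : PTree L N → Prop} (leaf : motive .leaf)
    (param : ∀ i, motive (.param i))
    (term : ∀ a l r, motive l → motive r → motive (.term a l r))
    (nt : ∀ B ts, (∀ t ∈ ts, motive t) → motive (.nt B ts)) : ∀ t, motive t
  | .leaf => leaf
  | .param i => param i
  | .term a l r =>
      term a l r (induction' leaf param term nt l) (induction' leaf param term nt r)
  | .nt B ts => nt B ts fun t _ => induction' leaf param term nt t

@[simp] lemma paramList_leaf : paramList (.leaf : PTree L N) = [] := by rw [paramList]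

@[simp] lemma paramList_param (i : ℕ) : paramList (.param i : PTree L N) = [i] := by
  rw [paramList]

@[simp] lemma paramList_term (a : L) (l r : PTree L N) :
    paramList (.term a l r) = paramList l ++ paramList r := by rw [paramList]

@[simp] lemma paramList_nt (B : N) (ts : List (PTree L N)) :
    paramList (.nt B ts) = (ts.map paramList).flatten := by
  rw [paramList, List.attach_map_val]

@[simp] lemma nodeCount_leaf : nodeCount (.leaf : PTree L N) = 1 := by rw [nodeCount]

@[simp] lemma nodeCount_param (i : ℕ) : nodeCount (.param i : PTree L N) = 1 := by
  rw [nodeCount]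

@[simp] lemma nodeCount_term (a : L) (l r : PTree L N) :
    nodeCount (.term a l r) = 1 + nodeCount l + nodeCount r := by rw [nodeCount]

@[simp] lemma nodeCount_nt (B : N) (ts : List (PTree L N)) :
    nodeCount (.nt B ts) = 1 + (ts.map nodeCount).sum := by
  rw [nodeCount, List.attach_map_val]

@[simp] lemma subst_leaf (env : List (PTree L N)) : subst env (.leaf : PTree L N) = .leaf := by
  rw [subst]

@[simp] lemma subst_param (env : List (PTree L N)) (i : ℕ) :
    subst env (.param i : PTree L N) = env.getD (i - 1) .leaf := by rw [subst]

@[simp] lemma subst_term (env : List (PTree L N)) (a : L) (l r : PTree L N) :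
    subst env (.term a l r) = .term a (subst env l) (subst env r) := by rw [subst]

@[simp] lemma subst_nt (env : List (PTree L N)) (B : N) (ts : List (PTree L N)) :
    subst env (.nt B ts) = .nt B (ts.map (subst env)) := by
  rw [subst, List.attach_map_val]

end PTree

namespace DST

open PTree

variable {L N Q M : Type} (D : DST L Q) (e : N × Q → M) (φ : N → Q → ℕ → Q)

/-- The pairs `(i, σ)` such that the run of `D` from `q` on `t` reaches the parameter `y_i` in
state `σ`; at a nonterminal node `B` reached in state `q'`, the run continues into the `j`-th
argument in state `φ B q' j`. -/
def paramStates : Q → PTree L N → List (ℕ × Q)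
  | _, .leaf => []
  | q, .param i => [(i, q)]
  | q, .term a l r => paramStates (D.step q a).1.1 l ++ paramStates (D.step q a).1.2 r
  | q, .nt B ts => (ts.attach.mapIdx fun j t => paramStates (φ B q j) t.1).flatten
decreasing_by
  all_goals simp_wf
  all_goals try omega
  all_goals (have := List.sizeOf_lt_of_mem t.2; omega)

def relabelTree : Q → PTree L N → PTree (L × Bool) M
  | _, .leaf => .leaf
  | _, .param i => .param i
  | q, .term a l r =>
      .term (a, (D.step q a).2) (relabelTree (D.step q a).1.1 l)
        (relabelTree (D.step q a).1.2 r)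
  | q, .nt B ts => .nt (e (B, q)) (ts.attach.mapIdx fun j t => relabelTree (φ B q j) t.1)
decreasing_by
  all_goals simp_wf
  all_goals try omega
  all_goals (have := List.sizeOf_lt_of_mem t.2; omega)

@[simp] lemma paramStates_leaf (q : Q) : D.paramStates φ q (.leaf : PTree L N) = [] := by
  rw [paramStates]

@[simp] lemma paramStates_param (q : Q) (i : ℕ) :
    D.paramStates φ q (.param i : PTree L N) = [(i, q)] := by
  rw [paramStates]

@[simp] lemma paramStates_term (q : Q) (a : L) (l r : PTree L N) :
    D.paramStates φ q (.term a l r) =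
      D.paramStates φ (D.step q a).1.1 l ++ D.paramStates φ (D.step q a).1.2 r := by
  rw [paramStates]

lemma paramStates_nt (q : Q) (B : N) (ts : List (PTree L N)) :
    D.paramStates φ q (.nt B ts) = (ts.mapIdx fun j t => D.paramStates φ (φ B q j) t).flatten := by
  rw [paramStates, List.mapIdx_attach_val (f := fun j t => D.paramStates φ (φ B q j) t)]

@[simp] lemma relabelTree_leaf (q : Q) : D.relabelTree e φ q (.leaf : PTree L N) = .leaf := by
  rw [relabelTree]

@[simp] lemma relabelTree_param (q : Q) (i : ℕ) :
    D.relabelTree e φ q (.param i : PTree L N) = .param i := by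
  rw [relabelTree]

@[simp] lemma relabelTree_term (q : Q) (a : L) (l r : PTree L N) :
    D.relabelTree e φ q (.term a l r) = .term (a, (D.step q a).2)
      (D.relabelTree e φ (D.step q a).1.1 l) (D.relabelTree e φ (D.step q a).1.2 r) := by
  rw [relabelTree]

lemma relabelTree_nt (q : Q) (B : N) (ts : List (PTree L N)) :
    D.relabelTree e φ q (.nt B ts) =
      .nt (e (B, q)) (ts.mapIdx fun j t => D.relabelTree e φ (φ B q j) t) := by
  rw [relabelTree, List.mapIdx_attach_val (f := fun j t => D.relabelTree e φ (φ B q j) t)]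

lemma paramStates_congr {φ₁ φ₂ : N → Q → ℕ → Q} (t : PTree L N)
    (h : ∀ B, Occurs B t → φ₁ B = φ₂ B) (q : Q) :
    D.paramStates φ₁ q t = D.paramStates φ₂ q t := by
  induction t using PTree.induction' generalizing q with
  | leaf => simp
  | param i => simp
  | term a l r ihl ihr =>
    simp only [paramStates_term, ihl (fun B hB => h B (.term_left a hB)),
      ihr (fun B hB => h B (.term_right a hB))]
  | nt B ts ih =>
    simp only [paramStates_nt, h B (.here ts)]
    congr 1
    refine List.mapIdx_eq_mapIdx_iff.2 fun i hi => ih _ (List.getElem_mem hi) ?_ _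
    exact fun C hC => h C (.nt B (List.getElem_mem hi) hC)

lemma map_fst_paramStates (t : PTree L N) (q : Q) :
    (D.paramStates φ q t).map Prod.fst = paramList t := by
  induction t using PTree.induction' generalizing q with
  | leaf => simp
  | param i => simp
  | term a l r ihl ihr => simp [ihl, ihr]
  | nt B ts ih =>
    rw [paramStates_nt, paramList_nt, List.map_flatten, List.map_mapIdx_eq_map]
    exact fun i t ht => ih t ht _

lemma paramList_relabelTree (t : PTree L N) (q : Q) :
    paramList (D.relabelTree e φ q t) = paramList t := by
  induction t using PTree.induction' generalizing q with
  | leaf => simp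
  | param i => simp
  | term a l r ihl ihr => simp [ihl, ihr]
  | nt B ts ih =>
    rw [relabelTree_nt, paramList_nt, paramList_nt, List.map_mapIdx_eq_map]
    exact fun i t ht => ih t ht _

lemma nodeCount_relabelTree (t : PTree L N) (q : Q) :
    nodeCount (D.relabelTree e φ q t) = nodeCount t := by
  induction t using PTree.induction' generalizing q with
  | leaf => simp
  | param i => simp
  | term a l r ihl ihr => simp [ihl, ihr]
  | nt B ts ih =>
    rw [relabelTree_nt, nodeCount_nt, nodeCount_nt, List.map_mapIdx_eq_map]
    exact fun i t ht => ih t ht _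

lemma arityOk_relabelTree {rank : N → ℕ} {rank' : M → ℕ} (he : ∀ B q, rank' (e (B, q)) = rank B)
    {t : PTree L N} (ht : ArityOk rank t) (q : Q) :
    ArityOk rank' (D.relabelTree e φ q t) := by
  induction ht generalizing q with
  | leaf => simpa using ArityOk.leaf
  | param i => simpa using ArityOk.param i
  | term a _ _ ihl ihr => simpa using ArityOk.term _ (ihl _) (ihr _)
  | nt A hlen _ ih =>
    rw [relabelTree_nt]
    refine .nt _ (by simp [hlen, he]) fun u hu => ?_
    obtain ⟨i, hi, rfl⟩ := List.mem_mapIdx.1 hu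
    exact ih _ (List.getElem_mem hi) _

lemma exists_occurs_of_occurs_relabelTree {C : M} {t : PTree L N} {q : Q}
    (h : Occurs C (D.relabelTree e φ q t)) : ∃ p : N × Q, e p = C ∧ Occurs p.1 t := by
  induction t using PTree.induction' generalizing q with
  | leaf => simp at h; cases h
  | param i => simp at h; cases h
  | term a l r ihl ihr =>
    rw [relabelTree_term] at h
    cases h with
    | term_left _ h => obtain ⟨p, hp, hl⟩ := ihl h; exact ⟨p, hp, .term_left a hl⟩
    | term_right _ h => obtain ⟨p, hp, hr⟩ := ihr h; exact ⟨p, hp, .term_right a hr⟩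
  | nt B ts ih =>
    rw [relabelTree_nt] at h
    cases h with
    | here => exact ⟨(B, q), rfl, .here ts⟩
    | nt _ hu h =>
      obtain ⟨i, hi, rfl⟩ := List.mem_mapIdx.1 hu
      obtain ⟨p, hp, hocc⟩ := ih _ (List.getElem_mem hi) h
      exact ⟨p, hp, .nt B (List.getElem_mem hi) hocc⟩

lemma relabelTree_subst (env : List (PTree L N))
    (env' : List (PTree (L × Bool) M)) (u : PTree L N) (q : Q)
    (h : ∀ j σ, (j, σ) ∈ D.paramStates φ q u →
      env'.getD (j - 1) .leaf = D.relabelTree e φ σ (env.getD (j - 1) .leaf)) :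
    D.relabelTree e φ q (subst env u) = subst env' (D.relabelTree e φ q u) := by
  induction u using PTree.induction' generalizing q with
  | leaf => simp
  | param i => simpa using (h i q (by simp)).symm
  | term a l r ihl ihr =>
    simp only [subst_term, relabelTree_term]
    rw [ihl _ fun j σ hj => h j σ (by simp [hj]), ihr _ fun j σ hj => h j σ (by simp [hj])]
  | nt B ts ih =>
    simp only [subst_nt, relabelTree_nt, PTree.nt.injEq, true_and]
    apply List.ext_getElem (by simp)
    intro i hi _
    simp only [List.getElem_mapIdx, List.getElem_map]
    refine ih _ (List.getElem_mem (by simpa using hi)) _ fun j σ hj => h j σ ?_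
    rw [paramStates_nt]
    exact List.mem_flatten.2 ⟨_, List.mem_mapIdx.2 ⟨i, by simpa using hi, rfl⟩, hj⟩

lemma relabelTree_eq_markRun {t : PTree L N} (ht : Ground t) (q : Q) :
    D.relabelTree e φ q t = markRun D q t := by
  induction ht generalizing q with
  | leaf => simp [markRun]
  | term a _ _ ihl ihr => simp [markRun, ihl, ihr]

end DST

namespace SLT

open PTree

variable {L N Q M : Type} [Finite N] (G : SLT L N) (D : DST L Q)

lemma wellFounded_occurs : WellFounded fun B A => Occurs B (G.P A) := by
  have : Std.Irrefl (Relation.TransGen fun B A => Occurs B (G.P A)) :=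
    ⟨fun A hA => G.acyclic A (Relation.transGen_swap.mp hA)⟩
  exact Subrelation.wf (fun h => Relation.TransGen.single h)
    (Finite.wellFounded_of_trans_of_irrefl (Relation.TransGen fun B A => Occurs B (G.P A)))

/-- `G.paramState D A q i` is the state in which the run of `D` from `q` on `val(A)` reaches
the parameter `y_(i+1)`: arguments are indexed from `0`, parameters from `1`. -/
noncomputable def paramState : N → Q → ℕ → Q :=
  open Classical in
  G.wellFounded_occurs.fix fun A φ q i =>
    ((D.paramStates (fun B => if h : Occurs B (G.P A) then φ B h else fun _ _ => D.q0) q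
      (G.P A)).getD i (0, D.q0)).2

lemma paramState_eq (A : N) (q : Q) (i : ℕ) :
    G.paramState D A q i = ((D.paramStates (G.paramState D) q (G.P A)).getD i (0, D.q0)).2 := by
  rw [paramState, WellFounded.fix_eq, D.paramStates_congr]
  exact fun B hB => dif_pos hB

lemma paramState_of_mem {A : N} {q : Q} {j : ℕ} {σ : Q}
    (h : (j, σ) ∈ D.paramStates (G.paramState D) q (G.P A)) :
    σ = G.paramState D A q (j - 1) := by
  obtain ⟨n, hn, hnth⟩ := List.mem_iff_getElem.1 h
  have hfst := D.map_fst_paramStates (G.paramState D) (G.P A) q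
  rw [G.params] at hfst
  have hj := List.getElem_of_eq hfst (i := n) (by simpa using hn)
  obtain rfl : j = 1 + n := by simpa [hnth] using hj
  rw [paramState_eq, Nat.add_sub_cancel_left, List.getD_eq_getElem _ _ hn, hnth]

noncomputable def relabel (e : N × Q ≃ M) : SLT (L × Bool) M where
  rank i := G.rank (e.symm i).1
  start := e (G.start, D.q0)
  P i := D.relabelTree e (G.paramState D) (e.symm i).2 (G.P (e.symm i).1)
  rank_start := by simp [G.rank_start]
  arity i := D.arityOk_relabelTree e _ (by simp) (G.arity _) _
  params i := by rw [DST.paramList_relabelTree, G.params]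
  acyclic i hi := G.acyclic (e.symm i).1 <| hi.lift (fun i => (e.symm i).1) fun a b hab => by
    obtain ⟨p, rfl, hp⟩ := D.exists_occurs_of_occurs_relabelTree e _ hab
    show Occurs _ _
    simpa using hp

variable (e : N × Q ≃ M)

@[simp] lemma relabel_start : (G.relabel D e).start = e (G.start, D.q0) := rfl

@[simp] lemma relabel_P_apply (p : N × Q) :
    (G.relabel D e).P (e p) = D.relabelTree e (G.paramState D) p.2 (G.P p.1) := by
  simp [relabel]

lemma Rw.relabel {s s' : PTree L N} (h : G.Rw s s') (q : Q) :
    (G.relabel D e).Rw (D.relabelTree e (G.paramState D) q s)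
      (D.relabelTree e (G.paramState D) q s') := by
  induction h generalizing q with
  | head A ts =>
    rw [DST.relabelTree_nt, D.relabelTree_subst e _ ts _ _ _ fun j σ hj => ?_]
    · simpa using Rw.head (G := G.relabel D e) (e (A, q)) _
    · rw [G.paramState_of_mem D hj, List.getD_eq_getElem?_getD, List.getD_eq_getElem?_getD,
        List.getElem?_mapIdx]
      cases ts[j - 1]? <;> simp
  | term_left a r _ ih => simpa using Rw.term_left _ _ (ih _)
  | term_right a l _ ih => simpa using Rw.term_right _ _ (ih _)
  | nt_child B u v _ ih =>
    simp only [DST.relabelTree_nt, List.mapIdx_append, List.mapIdx_cons]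
    exact Rw.nt_child _ _ _ (ih _)

lemma size_relabel [Fintype N] [Fintype Q] [Fintype M] :
    (G.relabel D e).size = Fintype.card Q * G.size := by
  simp only [size, relabel, DST.nodeCount_relabelTree]
  rw [e.symm.sum_comp (fun p => nodeCount (G.P p.1) - 1), Fintype.sum_prod_type, Finset.mul_sum]
  simp

end SLT

/-- Relabeling an SLT grammar by a DST automaton: there is a
constant `c > 0` such that for every SLT grammar `G` and DST automaton `A`
with state set `Q` there is an SLT grammar `G'` of size `O(|Q|·|G|)` whose
derived tree is the tree derived by `G` with every node selected by `A`
relabeled from its label `a` to the marked copy `â`. -/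
theorem slt_relabeling :
    ∃ c : ℕ, 0 < c ∧
      ∀ (L N Q : Type) [Fintype N] [Fintype Q] (G : SLT L N) (A : DST L Q),
        ∃ (m : ℕ) (G' : SLT (L × Bool) (Fin m)),
          SLT.size G' ≤ c * Fintype.card Q * (SLT.size G + 1) ∧
          ∀ t : PTree L N, PTree.Ground t →
            Relation.ReflTransGen (SLT.Rw G) (G.P G.start) t →
            Relation.ReflTransGen (SLT.Rw G') (G'.P G'.start)
              (markRun A A.q0 t) := by
  refine ⟨1, one_pos, fun L N Q _ _ G A => ?_⟩
  let e := Fintype.equivFin (N × Q)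
  refine ⟨_, G.relabel A e, ?_, fun t ht hder => ?_⟩
  · rw [SLT.size_relabel, one_mul]
    exact Nat.mul_le_mul_left _ (Nat.le_succ _)
  · rw [← A.relabelTree_eq_markRun e (G.paramState A) ht, SLT.relabel_start, SLT.relabel_P_apply]
    exact hder.lift _ fun s s' h => h.relabel G A e A.q0
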